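/- arXiv:2210.07746 — 12 statements merged into one kernel-verified Lean document; each statement's English description precedes it below -/
import Mathlib

section
/- The complement of a linear subspace of codimension at least 2 in a finite-dimensional real normed vector space is ample, i.e., every connected component of the complement has convex hull equal to the whole space. -/
/-- The complement of a linear subspace of codimension at least 2 in a
finite-dimensional real normed vector space is ample. -/
theorem ample_of_two_le_codim {F : Type*} [NormedAddCommGroup F] [NormedSpace ℝ F]
    [FiniteDimensional ℝ F] (W : Submodule ℝ F)
    (hcodim : 2 ≤ Module.finrank ℝ (F ⧸ W)) :
    AmpleSet ((W : Set F)ᶜ) := by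
  apply AmpleSet.of_one_lt_codim
  rw [← Module.finrank_eq_rank]
  exact_mod_cast hcodim
end

section
/- The barycentric coordinate map is smooth jointly in the point and the basis: the map F × A → ℝ^{d+1} sending (q, p₀,...,p_d) to the barycentric coordinates of q with respect to the affine basis (p₀,...,p_d) is infinitely differentiable, where A ⊆ F^{d+1} is the (open) set of affine bases of F. -/
/-!
Fix a reference affine basis `b` of `F`. A tuple `p` is an affine basis exactly when its matrix
`b.toMatrix p` of `b`-coordinates is invertible, and then Cramer's rule expresses the barycentric
coordinates of `q` with respect to `p` as `det⁻¹ • cramer` applied to the `b`-coordinates of `q`.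
The entries of `b.toMatrix p` and the `b`-coordinates of `q` are affine in `(q, p)`, determinants
and Cramer vectors are polynomial in them, and `det⁻¹` is smooth where `det ≠ 0`.
-/

open scoped ContDiff

open Matrix

section MatrixEntries

variable {𝕜 E 𝔸 ι : Type*} [NontriviallyNormedField 𝕜] [NormedAddCommGroup E] [NormedSpace 𝕜 E]
  [NormedCommRing 𝔸] [NormedAlgebra 𝕜 𝔸] [Fintype ι] [DecidableEq ι] {n : WithTop ℕ∞}
  {f : E → Matrix ι ι 𝔸}

theorem ContDiff.matrix_det (hf : ∀ i j, ContDiff 𝕜 n fun x => f x i j) :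
    ContDiff 𝕜 n fun x => (f x).det := by
  simp_rw [det_apply']
  exact ContDiff.sum fun σ _ => contDiff_const.mul (contDiff_prod fun i _ => hf (σ i) i)

theorem ContDiff.matrix_cramer {v : E → ι → 𝔸} (hf : ∀ i j, ContDiff 𝕜 n fun x => f x i j)
    (hv : ContDiff 𝕜 n v) : ContDiff 𝕜 n fun x => (f x).cramer (v x) := by
  refine contDiff_pi.2 fun k => ?_
  simp_rw [cramer_apply]
  refine ContDiff.matrix_det fun i j => ?_
  by_cases hjk : j = k
  · simpa [updateCol_apply, hjk] using contDiff_pi.1 hv i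
  · simpa [updateCol_apply, hjk] using hf i j

end MatrixEntries

namespace AffineBasis

section Field

variable {ι k V : Type*} [Fintype ι] [Field k] [AddCommGroup V] [Module k V]

theorem coords_linear_combination (b : AffineBasis ι k V) {w : ι → k} (hw : ∑ i, w i = 1) :
    b.coords (∑ i, w i • b i) = w := by
  ext i
  rw [coords_apply, ← Finset.univ.affineCombination_eq_linear_combination _ _ hw,
    b.coord_apply_combination_of_mem (Finset.mem_univ i) hw]

theorem coords_eq_det_inv_smul_cramer [DecidableEq ι] (b b₂ : AffineBasis ι k V) (x : V) :
    b₂.coords x = (b.toMatrix b₂).det⁻¹ • (b.toMatrix b₂)ᵀ.cramer (b.coords x) := by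
  have hdet : (b.toMatrix b₂).det ≠ 0 :=
    ((isUnit_iff_isUnit_det _).1 (b.isUnit_toMatrix b₂)).ne_zero
  rw [← b.det_smul_coords_eq_cramer_coords, inv_smul_smul₀ hdet]

end Field

variable {ι 𝕜 E : Type*} [Fintype ι] [NontriviallyNormedField 𝕜] [CompleteSpace 𝕜]
  [NormedAddCommGroup E] [NormedSpace 𝕜 E] [FiniteDimensional 𝕜 E] {n : WithTop ℕ∞}
  (b : AffineBasis ι 𝕜 E)

theorem contDiff_toMatrix_apply (i j : ι) : ContDiff 𝕜 n fun p : ι → E => b.toMatrix p i j :=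
  ((smooth_barycentric_coord b j).of_le le_top).comp (contDiff_apply 𝕜 E i)

theorem contDiffOn_det_inv_smul_cramer [DecidableEq ι] :
    ContDiffOn 𝕜 n
      (fun xp : E × (ι → E) => (b.toMatrix xp.2).det⁻¹ • (b.toMatrix xp.2)ᵀ.cramer (b.coords xp.1))
      {xp | IsUnit (b.toMatrix xp.2)} := by
  have hentry (i j : ι) : ContDiff 𝕜 n fun xp : E × (ι → E) => b.toMatrix xp.2 i j :=
    (b.contDiff_toMatrix_apply i j).comp contDiff_snd
  have hcoords : ContDiff 𝕜 n fun xp : E × (ι → E) => b.coords xp.1 :=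
    contDiff_pi.2 fun j => ((smooth_barycentric_coord b j).of_le le_top).comp contDiff_fst
  have hdet_inv : ContDiffOn 𝕜 n (fun xp : E × (ι → E) => (b.toMatrix xp.2).det⁻¹)
      {xp | IsUnit (b.toMatrix xp.2)} :=
    (ContDiff.matrix_det hentry).contDiffOn.inv fun xp hxp =>
      ((isUnit_iff_isUnit_det _).1 hxp).ne_zero
  exact hdet_inv.smul (ContDiff.matrix_cramer (fun i j => hentry j i) hcoords).contDiffOn

end AffineBasis

/-- The barycentric coordinates are smooth jointly in the point and the basis:
any function `w` assigning to `(q, p)`, where `p` is a tuple forming an affine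
basis, the barycentric coordinates of `q` with respect to `p`, is `C^∞` on the
set of pairs `(q, p)` with `p` an affine basis. -/
theorem smooth_barycentric_coords {F : Type*} [NormedAddCommGroup F] [NormedSpace ℝ F]
    [FiniteDimensional ℝ F]
    (A : Set (F × (Fin (Module.finrank ℝ F + 1) → F)))
    (hA : A = {qp | AffineIndependent ℝ qp.2 ∧ affineSpan ℝ (Set.range qp.2) = ⊤})
    (w : F × (Fin (Module.finrank ℝ F + 1) → F) → Fin (Module.finrank ℝ F + 1) → ℝ)
    (hw : ∀ qp ∈ A, (∑ i, w qp i = 1) ∧ ∑ i, w qp i • qp.2 i = qp.1) :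
    ContDiffOn ℝ ∞ w A := by
  obtain ⟨b⟩ : Nonempty (AffineBasis (Fin (Module.finrank ℝ F + 1)) ℝ F) :=
    AffineBasis.exists_affineBasis_of_finiteDimensional (by simp)
  have hA_unit : A = {qp | IsUnit (b.toMatrix qp.2)} := by
    simp only [hA, b.isUnit_toMatrix_iff]
  refine hA_unit ▸ b.contDiffOn_det_inv_smul_cramer.congr fun qp hqp => ?_
  obtain ⟨hind, htot⟩ := (b.isUnit_toMatrix_iff qp.2).1 hqp
  let b₂ : AffineBasis _ ℝ F := ⟨qp.2, hind, htot⟩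
  obtain ⟨hsum, hcomb⟩ := hw qp (hA_unit ▸ hqp)
  calc w qp = b₂.coords qp.1 := by rw [← hcomb]; exact (b₂.coords_linear_combination hsum).symm
    _ = _ := b.coords_eq_det_inv_smul_cramer b₂ qp.1
end

section
/- If an open set Ω in a finite-dimensional real vector space F is such that a point g lies in the convex hull of the connected component of Ω containing a point b, then there exists an affine basis contained in that connected component with respect to which g has strictly positive barycentric coordinates; moreover there exists a continuous loop based at b, null-homotopic within Ω, whose image surrounds g. -/
/-!
By Carathéodory's theorem `g` lies in the convex hull of an affinely independent family in the
component, and since the component is open this family extends to an affine basis inside it.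
Dilating that basis slightly about its centroid keeps it inside the component and puts `g` in the
interior of its convex hull, i.e. gives `g` positive barycentric coordinates. The component is
open and connected, hence path-connected, so a single loop at `b` passes through all the basis
points; running it only up to time `t` and back contracts it within the component.
-/

/-- `f` surrounds `v`: there is an affine basis of `F` contained in the image of `f`
with respect to which `v` has strictly positive barycentric coordinates. -/
def LoopSurrounds {F : Type*} [NormedAddCommGroup F] [NormedSpace ℝ F]
    (f : ℝ → F) (v : F) : Prop :=
  ∃ (p : Fin (Module.finrank ℝ F + 1) → F) (w : Fin (Module.finrank ℝ F + 1) → ℝ),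
    (∀ i, p i ∈ Set.range f) ∧ AffineIndependent ℝ p ∧
      affineSpan ℝ (Set.range p) = ⊤ ∧ (∀ i, 0 < w i) ∧
      ∑ i, w i = 1 ∧ ∑ i, w i • p i = v

open Set Function AffineMap

namespace AffineBasis

variable {ι k V₁ P₁ V₂ P₂ : Type*} [Ring k] [AddCommGroup V₁] [Module k V₁] [AddTorsor V₁ P₁]
  [AddCommGroup V₂] [Module k V₂] [AddTorsor V₂ P₂]

def map (B : AffineBasis ι k P₁) (e : P₁ ≃ᵃ[k] P₂) : AffineBasis ι k P₂ where
  toFun := e ∘ B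
  ind' := e.affineIndependent_iff.mpr B.ind
  tot' := by rw [range_comp, ← AffineEquiv.span_eq_top_iff, B.tot]

@[simp]
theorem coe_map (B : AffineBasis ι k P₁) (e : P₁ ≃ᵃ[k] P₂) : ⇑(B.map e) = e ∘ B := rfl

end AffineBasis

section Barycentric

variable {F : Type*} [NormedAddCommGroup F] [NormedSpace ℝ F]

theorem AffineBasis.exists_range_subset_convexHull_subset_interior_convexHull {ι : Type*}
    [Fintype ι] (B : AffineBasis ι ℝ F) {s : Set F} (hs : IsOpen s) (hB : range B ⊆ s) :
    ∃ B' : AffineBasis ι ℝ F, range B' ⊆ s ∧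
      convexHull ℝ (range B) ⊆ interior (convexHull ℝ (range B')) := by
  set c := Finset.univ.centroid ℝ B
  obtain ⟨ε, hε, hεs⟩ := (eventually_homothety_image_subset_of_finite_subset_interior ℝ c
    (finite_range B) (hs.interior_eq.symm ▸ hB)).exists_gt
  let e := AffineEquiv.homothetyUnitsMulHom c (Units.mk0 ε (by positivity))
  have he : ⇑e = homothety c ε := AffineEquiv.coe_homothetyUnitsMulHom_apply c _
  refine ⟨B.map e, ?_, ?_⟩
  · rwa [B.coe_map, range_comp, he]
  · rw [B.coe_map, range_comp, he, ← AffineMap.image_convexHull]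
    exact (convex_convexHull ℝ _).subset_interior_image_homothety_of_one_lt
      B.centroid_mem_interior_convexHull ε hε

theorem exists_affineBasis_range_subset_mem_convexHull [FiniteDimensional ℝ F] {s : Set F}
    (hs : IsOpen s) {g : F} (hg : g ∈ convexHull ℝ s) :
    ∃ B : AffineBasis (Fin (Module.finrank ℝ F + 1)) ℝ F, range B ⊆ s ∧
      g ∈ convexHull ℝ (range B) := by
  obtain ⟨t, htind, hts, hgt⟩ : ∃ t : Finset F, AffineIndependent ℝ ((↑) : t → F) ∧ ↑t ⊆ s ∧
      g ∈ convexHull ℝ ↑t := by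
    rw [convexHull_eq_union] at hg
    simpa using hg
  obtain ⟨u, htu, hus, huind, huspan⟩ := hs.exists_between_affineIndependent_span_eq_top hts
    (convexHull_nonempty_iff.mp ⟨g, hgt⟩) htind
  let B : AffineBasis u ℝ F := ⟨(↑), huind, by rwa [Subtype.range_coe]⟩
  have : Fintype u := B.finite_set.fintype
  let B' := B.reindex (Fintype.equivFinOfCardEq B.card_eq_finrank_add_one)
  have hB' : range B' = u := by
    rw [B.coe_reindex, EquivLike.range_comp]
    exact Subtype.range_coe
  exact ⟨B', hB' ▸ hus, hB' ▸ convexHull_mono htu hgt⟩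

theorem exists_affineBasis_range_subset_coord_pos [FiniteDimensional ℝ F] {s : Set F}
    (hs : IsOpen s) {g : F} (hg : g ∈ convexHull ℝ s) :
    ∃ B : AffineBasis (Fin (Module.finrank ℝ F + 1)) ℝ F, range B ⊆ s ∧ ∀ i, 0 < B.coord i g := by
  obtain ⟨B₀, hB₀s, hgB₀⟩ := exists_affineBasis_range_subset_mem_convexHull hs hg
  obtain ⟨B, hBs, hB⟩ := B₀.exists_range_subset_convexHull_subset_interior_convexHull hs hB₀s
  have hgB : g ∈ interior (convexHull ℝ (range B)) := hB hgB₀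
  rw [B.interior_convexHull] at hgB
  exact ⟨B, hBs, hgB⟩

end Barycentric

section Loops

variable {X : Type*} [TopologicalSpace X]

theorem IsPathConnected.exists_loop_range_between {S : Set X} (hS : IsPathConnected S) {b : X}
    (hb : b ∈ S) {t : Set X} (ht : t.Finite) (htS : t ⊆ S) :
    ∃ L : Path b b, t ⊆ range L ∧ range L ⊆ S := by
  induction t, ht using Set.Finite.induction_on with
  | empty => exact ⟨Path.refl b, empty_subset _, by simpa [Path.refl_range]⟩
  | @insert a t _ _ ih =>
    obtain ⟨L, htL, hLS⟩ := ih ((subset_insert a t).trans htS)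
    let δ := (hS.joinedIn b hb a (htS (mem_insert a t))).somePath
    have hδS : range δ ⊆ S := range_subset_iff.2 (JoinedIn.somePath_mem _)
    refine ⟨(δ.trans δ.symm).trans L, ?_, ?_⟩
    · simp only [Path.trans_range, Path.symm_range, union_self]
      exact insert_subset (Or.inl ⟨1, δ.target⟩) (htL.trans subset_union_right)
    · simp only [Path.trans_range, Path.symm_range, union_self]
      exact union_subset hδS hLS

namespace Path

variable {b : X}

/-- `L.contractingLoops t` runs along `L` up to time `t` and back once per unit of time, so
`t = 0` gives the constant loop and `t = 1` a reparametrisation of `L`. -/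
noncomputable def contractingLoops (L : Path b b) (t s : ℝ) : X :=
  L.extend (t * ((1 - Real.cos (2 * Real.pi * s)) / 2))

variable (L : Path b b)

theorem continuous_contractingLoops : Continuous ↿L.contractingLoops :=
  L.continuous_extend.comp (by fun_prop)

theorem contractingLoops_periodic (t : ℝ) : Periodic (L.contractingLoops t) 1 := by
  intro s
  simp only [contractingLoops, mul_add, mul_one, Real.cos_add_two_pi]

@[simp]
theorem contractingLoops_apply_zero (t : ℝ) : L.contractingLoops t 0 = b := by
  simp [contractingLoops]

@[simp]
theorem contractingLoops_zero (s : ℝ) : L.contractingLoops 0 s = b := by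
  simp [contractingLoops]

theorem contractingLoops_mem_range (t s : ℝ) : L.contractingLoops t s ∈ range L := by
  rw [← L.extend_range]
  exact mem_range_self _

theorem range_contractingLoops_one : range (L.contractingLoops 1) = range L := by
  refine (range_subset_iff.2 (L.contractingLoops_mem_range 1)).antisymm ?_
  rintro _ ⟨u, rfl⟩
  refine ⟨Real.arccos (1 - 2 * u) / (2 * Real.pi), ?_⟩
  have hu := u.2
  rw [contractingLoops, mul_div_cancel₀ _ (by positivity), Real.cos_arccos (by linarith [hu.2])
    (by linarith [hu.1]), one_mul, show (1 - (1 - 2 * (u : ℝ))) / 2 = u by ring, L.extend_apply hu]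

end Path

end Loops

/-- If `g` lies in the convex hull of the connected component of an open set `Ω`
containing `b`, then there is an affine basis in that component with respect to which
`g` has positive barycentric coordinates, and a continuous loop based at `b`,
null-homotopic within `Ω` (indeed within the component), surrounding `g`. -/
theorem exists_surrounding_loop {F : Type*} [NormedAddCommGroup F] [NormedSpace ℝ F]
    [FiniteDimensional ℝ F] {Ω : Set F} (hΩ : IsOpen Ω) {b g : F} (hb : b ∈ Ω)
    (hg : g ∈ convexHull ℝ (connectedComponentIn Ω b)) :
    (∃ (p : Fin (Module.finrank ℝ F + 1) → F) (w : Fin (Module.finrank ℝ F + 1) → ℝ),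
      (∀ i, p i ∈ connectedComponentIn Ω b) ∧ AffineIndependent ℝ p ∧
        affineSpan ℝ (Set.range p) = ⊤ ∧ (∀ i, 0 < w i) ∧
        ∑ i, w i = 1 ∧ ∑ i, w i • p i = g) ∧
    ∃ γ : ℝ → ℝ → F,
      Continuous ↿γ ∧
      (∀ t, Function.Periodic (γ t) 1) ∧
      (∀ t, γ t 0 = b) ∧
      (∀ s, γ 0 s = b) ∧
      (∀ t s, γ t s ∈ Ω) ∧
      LoopSurrounds (γ 1) g := by
  have hbS : b ∈ connectedComponentIn Ω b := mem_connectedComponentIn hb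
  have hSopen : IsOpen (connectedComponentIn Ω b) := hΩ.connectedComponentIn
  have hSpath : IsPathConnected (connectedComponentIn Ω b) :=
    hSopen.isConnected_iff_isPathConnected.mp (isConnected_connectedComponentIn_iff.mpr hb)
  obtain ⟨B, hBS, hBg⟩ := exists_affineBasis_range_subset_coord_pos hSopen hg
  obtain ⟨L, hBL, hLS⟩ := hSpath.exists_loop_range_between hbS (finite_range B) hBS
  have hbary : AffineIndependent ℝ B ∧ affineSpan ℝ (range B) = ⊤ ∧ (∀ i, 0 < B.coord i g) ∧
      ∑ i, B.coord i g = 1 ∧ ∑ i, B.coord i g • B i = g :=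
    ⟨B.ind, B.tot, hBg, B.sum_coord_apply_eq_one g, B.linear_combination_coord_eq_self g⟩
  refine ⟨⟨B, fun i => B.coord i g, fun i => hBS (mem_range_self i), hbary⟩,
    L.contractingLoops, L.continuous_contractingLoops, L.contractingLoops_periodic,
    L.contractingLoops_apply_zero, L.contractingLoops_zero,
    fun t s => connectedComponentIn_subset Ω b (hLS (L.contractingLoops_mem_range t s)),
    B, fun i => B.coord i g, fun i => ?_, hbary⟩
  rw [L.range_contractingLoops_one]
  exact hBL (mem_range_self i)
end

section
/- The surrounding condition is open: if a continuous loop γ₀ surrounds a point v₀, then every continuous loop γ sufficiently uniformly close to γ₀ surrounds every point v sufficiently close to v₀. -/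
open Filter Matrix Set Topology

namespace AffineBasis

section Topology

variable {ι 𝕜 E P : Type*} [NontriviallyNormedField 𝕜]
  [CompleteSpace 𝕜] [NormedAddCommGroup E] [NormedSpace 𝕜 E] [FiniteDimensional 𝕜 E]
  [MetricSpace P] [NormedAddTorsor E P] (b : AffineBasis ι 𝕜 P)

theorem continuous_coords : Continuous b.coords :=
  continuous_pi fun i => continuous_barycentric_coord b i

theorem continuous_toMatrix : Continuous fun q : ι → P => b.toMatrix q :=
  continuous_matrix fun i j => (continuous_barycentric_coord b j).comp (continuous_apply i)

variable [Fintype ι] [DecidableEq ι]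

theorem eventually_isUnit_toMatrix : ∀ᶠ q in 𝓝 ⇑b, IsUnit (b.toMatrix q) := by
  have hdet : ∀ᶠ q in 𝓝 ⇑b, (b.toMatrix q).det ≠ 0 :=
    b.continuous_toMatrix.matrix_det.continuousAt.eventually_ne (by simp [b.toMatrix_self])
  filter_upwards [hdet] with q hq
  rw [Matrix.isUnit_iff_isUnit_det]
  exact hq.isUnit

/-- Whenever the tuple `x.1` is an affine basis, `b.coords x.2 ᵥ* (b.toMatrix x.1)⁻¹` are the
barycentric coordinates of `x.2` in it (`AffineBasis.toMatrix_inv_vecMul_toMatrix`). -/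
theorem tendsto_coords_vecMul_inv_toMatrix (p : P) :
    Tendsto (fun x : (ι → P) × P => b.coords x.2 ᵥ* (b.toMatrix x.1)⁻¹)
      (𝓝 (⇑b, p)) (𝓝 (b.coords p)) := by
  have hinv : ContinuousAt (fun q : ι → P => (b.toMatrix q)⁻¹) ⇑b := by
    refine (continuousAt_matrix_inv _ ?_).comp b.continuous_toMatrix.continuousAt
    simp [b.toMatrix_self]
  have hlim : Tendsto (fun x : (ι → P) × P => b.coords x.2 ᵥ* (b.toMatrix x.1)⁻¹)
      (𝓝 (⇑b, p)) (𝓝 (b.coords p ᵥ* (b.toMatrix b)⁻¹)) :=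
    (continuous_fst.matrix_vecMul continuous_snd).continuousAt.tendsto.comp
      ((b.continuous_coords.comp continuous_snd).continuousAt.prodMk_nhds
        (hinv.comp_of_eq (continuousAt_fst (p := (⇑b, p))) rfl))
  rwa [b.toMatrix_self, inv_one, vecMul_one] at hlim

end Topology

variable {ι E : Type*} [Fintype ι] [DecidableEq ι] [NormedAddCommGroup E] [NormedSpace ℝ E]
  [FiniteDimensional ℝ E] {P : Type*} [MetricSpace P] [NormedAddTorsor E P]

theorem eventually_exists_pos_coord (b : AffineBasis ι ℝ P) {p : P} (hp : ∀ i, 0 < b.coord i p) :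
    ∀ᶠ x in 𝓝 (⇑b, p), ∃ b' : AffineBasis ι ℝ P, ⇑b' = x.1 ∧ ∀ i, 0 < b'.coord i x.2 := by
  have hpos : ∀ᶠ x in 𝓝 (⇑b, p), ∀ i, 0 < (b.coords x.2 ᵥ* (b.toMatrix x.1)⁻¹) i :=
    eventually_all.2 fun i =>
      ((continuous_apply i).continuousAt.tendsto.comp
        (b.tendsto_coords_vecMul_inv_toMatrix p)).eventually_const_lt (hp i)
  filter_upwards [b.eventually_isUnit_toMatrix.prod_inl_nhds p, hpos] with x hunit hx
  obtain ⟨hind, hspan⟩ := (b.isUnit_toMatrix_iff x.1).mp hunit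
  let b' : AffineBasis ι ℝ P := ⟨x.1, hind, hspan⟩
  refine ⟨b', rfl, fun i => ?_⟩
  have hi := hx i
  rwa [show b.toMatrix x.1 = b.toMatrix b' from rfl, b.toMatrix_inv_vecMul_toMatrix,
    coords_apply] at hi

end AffineBasis

theorem loopSurrounds_iff {F : Type*} [NormedAddCommGroup F] [NormedSpace ℝ F]
    {f : ℝ → F} {v : F} :
    LoopSurrounds f v ↔ ∃ b : AffineBasis (Fin (Module.finrank ℝ F + 1)) ℝ F,
      range b ⊆ range f ∧ ∀ i, 0 < b.coord i v := by
  constructor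
  · rintro ⟨p, w, hp, hind, hspan, hw, hw1, rfl⟩
    let b : AffineBasis _ ℝ F := ⟨p, hind, hspan⟩
    refine ⟨b, range_subset_iff.2 hp, fun i => ?_⟩
    have hcoord : b.coord i (Finset.univ.affineCombination ℝ p w) = w i :=
      b.coord_apply_combination_of_mem (Finset.mem_univ i) hw1
    rw [← Finset.univ.affineCombination_eq_linear_combination p w hw1, hcoord]
    exact hw i
  · rintro ⟨b, hb, hpos⟩
    exact ⟨b, fun i => b.coord i v, fun i => hb (mem_range_self i), b.ind, b.tot, hpos,
      b.sum_coord_apply_eq_one v, b.linear_combination_coord_eq_self v⟩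

theorem surrounds_open_general {F : Type*} [NormedAddCommGroup F] [NormedSpace ℝ F]
    [FiniteDimensional ℝ F] {γ₀ : ℝ → F} {v₀ : F}
    (h : LoopSurrounds γ₀ v₀) :
    ∃ ε > 0, ∀ γ : ℝ → F, Continuous γ → Function.Periodic γ 1 →
      (∀ s, ‖γ s - γ₀ s‖ < ε) → ∀ v : F, ‖v - v₀‖ < ε → LoopSurrounds γ v := by
  obtain ⟨b, hb, hpos⟩ := loopSurrounds_iff.mp h
  choose t ht using fun i => hb (mem_range_self i)
  obtain ⟨ε, hε, hball⟩ := Metric.eventually_nhds_iff.mp (b.eventually_exists_pos_coord hpos)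
  refine ⟨ε, hε, fun γ _ _ hclose v hv => ?_⟩
  have hdist : dist (fun i => γ (t i), v) (⇑b, v₀) < ε := by
    rw [Prod.dist_eq, max_lt_iff, dist_pi_lt_iff hε]
    dsimp only
    exact ⟨fun i => by rw [dist_eq_norm, ← ht i]; exact hclose _, by rwa [dist_eq_norm]⟩
  obtain ⟨b', hb', hpos'⟩ := hball hdist
  exact loopSurrounds_iff.mpr ⟨b', hb' ▸ range_subset_iff.2 fun i => mem_range_self _, hpos'⟩

/-- The surrounding condition is open: if a continuous loop `γ₀` surrounds `v₀`, then
every continuous loop uniformly close to `γ₀` surrounds every point close to `v₀`. -/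
theorem surrounds_open {F : Type*} [NormedAddCommGroup F] [NormedSpace ℝ F]
    [FiniteDimensional ℝ F] {γ₀ : ℝ → F} {v₀ : F}
    (hγ₀ : Continuous γ₀) (hper₀ : Function.Periodic γ₀ 1)
    (h : LoopSurrounds γ₀ v₀) :
    ∃ ε > 0, ∀ γ : ℝ → F, Continuous γ → Function.Periodic γ 1 →
      (∀ s, ‖γ s - γ₀ s‖ < ε) → ∀ v : F, ‖v - v₀‖ < ε → LoopSurrounds γ v :=
  surrounds_open_general h
end

section
/- For every function f : E → ℝ on a finite-dimensional real normed vector space that is locally bounded below by positive constants (every point has a neighbourhood on which f is bounded below by some positive constant), there exists a smooth (C^∞) positive function g : E → ℝ with g(x) ≤ f(x) for all x. -/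
/-! The constraint sets `(0, f x]` are convex and each contains a constant on a neighbourhood of
any point, so gluing these local constants with a smooth partition of unity gives `g`. -/

open scoped ContDiff Manifold Topology

theorem exists_contDiff_forall_mem_convex_of_local_const {E F : Type*}
    [NormedAddCommGroup E] [NormedSpace ℝ E] [FiniteDimensional ℝ E]
    [NormedAddCommGroup F] [NormedSpace ℝ F] {n : ℕ∞} {t : E → Set F}
    (ht : ∀ x, Convex ℝ (t x)) (Hloc : ∀ x, ∃ c : F, ∀ᶠ y in 𝓝 x, c ∈ t y) :
    ∃ g : E → F, ContDiff ℝ n g ∧ ∀ x, g x ∈ t x := by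
  obtain ⟨g, hg⟩ := exists_contMDiffMap_forall_mem_convex_of_local_const 𝓘(ℝ, E) (n := n) ht Hloc
  exact ⟨g, contMDiff_iff_contDiff.mp g.contMDiff, hg⟩

/-- A function locally bounded below by positive constants is globally bounded below
by a smooth positive function. -/
theorem exists_smooth_pos_le {E : Type*} [NormedAddCommGroup E] [NormedSpace ℝ E]
    [FiniteDimensional ℝ E] (f : E → ℝ)
    (hf : ∀ x₀ : E, ∃ U ∈ nhds x₀, ∃ ε > (0 : ℝ), ∀ x ∈ U, ε ≤ f x) :
    ∃ g : E → ℝ, ContDiff ℝ ∞ g ∧ (∀ x, 0 < g x) ∧ ∀ x, g x ≤ f x := by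
  have hloc : ∀ x₀, ∃ c : ℝ, ∀ᶠ x in 𝓝 x₀, c ∈ Set.Ioc 0 (f x) := fun x₀ ↦ by
    obtain ⟨U, hU, ε, hε, hεf⟩ := hf x₀
    exact ⟨ε, Filter.mem_of_superset hU fun x hx ↦ ⟨hε, hεf x hx⟩⟩
  obtain ⟨g, hg_smooth, hg⟩ :=
    exists_contDiff_forall_mem_convex_of_local_const (fun x ↦ convex_Ioc 0 (f x)) hloc
  exact ⟨g, hg_smooth, fun x ↦ (hg x).1, fun x ↦ (hg x).2⟩
end

section
/- Smooth approximation relative to a closed set: Let E, F be real normed vector spaces with E finite-dimensional, n ∈ ℕ ∪ {∞}, C ⊆ E closed, ε : E → ℝ continuous and positive, and f : E → F continuous and of class C^n on a neighbourhood of C. Then there exists a C^n function f' : E → F that coincides with f on C and satisfies ‖f'(x) − f(x)‖ ≤ ε(x) for all x. -/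
/-- Smooth approximation relative to a closed set: a continuous function which is `C^n`
near a closed set `C` can be approximated within a continuous positive error `ε` by a
global `C^n` function agreeing with it on `C`. -/
theorem exists_contDiff_approx {E F : Type*} [NormedAddCommGroup E] [NormedSpace ℝ E]
    [FiniteDimensional ℝ E] [NormedAddCommGroup F] [NormedSpace ℝ F]
    (n : ℕ∞) {C : Set E} (hC : IsClosed C) {ε : E → ℝ}
    (hε : Continuous ε) (hε' : ∀ x, 0 < ε x) {f : E → F} (hf : Continuous f)
    (hfC : ∃ U : Set E, IsOpen U ∧ C ⊆ U ∧ ContDiffOn ℝ n f U) :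
    ∃ f' : E → F, ContDiff ℝ n f' ∧ (∀ x ∈ C, f' x = f x) ∧
      ∀ x, ‖f' x - f x‖ ≤ ε x := by
  obtain ⟨U, hU, hCU, hfU⟩ := hfC
  obtain ⟨g, hg, hgf, hgC, -⟩ :=
    hf.exists_contDiff_approx_and_eqOn n hε hε' hC (hU.mem_nhdsSet.2 hCU) hfU
  exact ⟨g, hg, hgC, fun x => (dist_eq_norm (g x) (f x) ▸ hgf x).le⟩
end

section
/- Differentiation under the integral sign with variable endpoint: Let F be a real Banach space and H a finite-dimensional real normed space, let n ≥ 1 (or n = ∞), let a ∈ ℝ, and assume s : H → ℝ and Φ : H × ℝ → F are of class C^n. Then x ↦ ∫_a^{s(x)} Φ(x,t) dt is of class C^n with derivative at x equal to the linear map ∫_a^{s(x)} ∂Φ/∂x (x,t) dt + Φ(x, s(x)) ⊗ Ds(x) (i.e., v ↦ ∫_a^{s(x)} D_xΦ(x,t)(v) dt + Ds(x)(v)·Φ(x, s(x))). -/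
/-!
Let `G (x, u) = ∫ t in a..u, Ψ x t`. Splitting the integral at `u₀`, the piece over `[a, u₀]` is
differentiated under the integral sign, the partial derivative being bounded near the compact set
`{x₀} × [a, u₀]`; by continuity of `Ψ`, the piece over `[u₀, u]` is `(u - u₀) • Ψ x₀ u₀` up to
`o(‖(x, u) - (x₀, u₀)‖)`. The derivative of `G` so obtained is again a parametric primitive (of
`∂Ψ/∂x`) plus a term as smooth as `Ψ`, so `G` is `C^n` by induction on `n`, and the theorem follows
by composing `G` with `x ↦ (x, s x)`.
-/

open MeasureTheory Set Filter Metric ContinuousLinearMap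
open scoped Topology Interval

section PartialDerivative

variable {𝕜 : Type*} [NontriviallyNormedField 𝕜]
  {H K E : Type*} [NormedAddCommGroup H] [NormedSpace 𝕜 H] [NormedAddCommGroup K]
  [NormedSpace 𝕜 K] [NormedAddCommGroup E] [NormedSpace 𝕜 E]

theorem ContDiff.fderiv_partial_fst {Ψ : H → K → E} {m n : WithTop ℕ∞}
    (hΨ : ContDiff 𝕜 n ↿Ψ) (hmn : m + 1 ≤ n) :
    ContDiff 𝕜 m ↿fun x t ↦ fderiv 𝕜 (fun y ↦ Ψ y t) x :=
  ContDiff.fderiv (f := fun p y ↦ Ψ y p.2)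
    (hΨ.comp (contDiff_snd.prodMk (contDiff_snd.comp contDiff_fst))) contDiff_fst hmn

theorem ContDiff.hasFDerivAt_partial_fst {Ψ : H → K → E} (hΨ : ContDiff 𝕜 1 ↿Ψ) (x : H) (t : K) :
    HasFDerivAt (fun y ↦ Ψ y t) (fderiv 𝕜 (fun y ↦ Ψ y t) x) x :=
  ((hΨ.comp (contDiff_id.prodMk contDiff_const)).differentiable one_ne_zero x).hasFDerivAt

end PartialDerivative

theorem IsCompact.exists_bound_nhds_of_continuous {X Y E : Type*} [TopologicalSpace X]
    [TopologicalSpace Y] [SeminormedAddCommGroup E] {K : Set Y} (hK : IsCompact K)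
    {g : X → Y → E} (hg : Continuous ↿g) (x₀ : X) :
    ∃ C, ∀ᶠ x in 𝓝 x₀, ∀ y ∈ K, ‖g x y‖ ≤ C := by
  obtain ⟨C, hC⟩ :=
    hK.exists_bound_of_continuousOn (hg.comp (Continuous.prodMk_right x₀)).continuousOn
  refine ⟨C + 1, hK.eventually_forall_of_forall_eventually fun y hy ↦ ?_⟩
  have hlt : ‖g x₀ y‖ < C + 1 := (hC y hy).trans_lt (lt_add_one C)
  exact (hg.norm.continuousAt.eventually (gt_mem_nhds hlt)).mono fun _ ↦ le_of_lt

namespace intervalIntegral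

variable {H E : Type*} [NormedAddCommGroup H] [NormedSpace ℝ H] [NormedAddCommGroup E]
  [NormedSpace ℝ E]

theorem hasFDerivAt_parametric_integral {Ψ : H → ℝ → E} (hΨ : ContDiff ℝ 1 ↿Ψ) (a b : ℝ)
    (x₀ : H) :
    HasFDerivAt (fun x ↦ ∫ t in a..b, Ψ x t) (∫ t in a..b, fderiv ℝ (fun y ↦ Ψ y t) x₀) x₀ := by
  have hD : Continuous ↿fun x t ↦ fderiv ℝ (fun y ↦ Ψ y t) x :=
    (hΨ.fderiv_partial_fst (m := 0) le_rfl).continuous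
  obtain ⟨C, hC⟩ := (isCompact_uIcc (a := a) (b := b)).exists_bound_nhds_of_continuous hD x₀
  have hΨx : ∀ x, Continuous (Ψ x) := fun x ↦ hΨ.continuous.comp (Continuous.prodMk_right x)
  refine hasFDerivAt_integral_of_dominated_of_fderiv_le (bound := fun _ ↦ C) hC
    (.of_forall fun x ↦ (hΨx x).aestronglyMeasurable) ((hΨx x₀).intervalIntegrable a b)
    (hD.comp (Continuous.prodMk_right x₀)).aestronglyMeasurable
    (.of_forall fun t ht x hx ↦ hx t (uIoc_subset_uIcc ht)) intervalIntegrable_const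
    (.of_forall fun t _ x _ ↦ hΨ.hasFDerivAt_partial_fst x t)

theorem hasFDerivAt_parametric_integral_from [CompleteSpace E] {Ψ : H → ℝ → E}
    (hΨ : Continuous ↿Ψ) (x₀ : H) (u₀ : ℝ) :
    HasFDerivAt (fun p : H × ℝ ↦ ∫ t in u₀..p.2, Ψ p.1 t)
      ((snd ℝ H ℝ).smulRight (Ψ x₀ u₀)) (x₀, u₀) := by
  rw [hasFDerivAt_iff_isLittleO, Asymptotics.isLittleO_iff]
  intro ε hε
  obtain ⟨δ, hδ, hΨδ⟩ := Metric.continuousAt_iff.mp (hΨ.continuousAt (x := (x₀, u₀))) ε hε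
  filter_upwards [ball_mem_nhds (x₀, u₀) hδ] with p hp
  have hclose : ∀ t ∈ Ι u₀ p.2, ‖Ψ p.1 t - Ψ x₀ u₀‖ ≤ ε := fun t ht ↦ by
    have ht' : dist t u₀ ≤ dist p.2 u₀ := abs_sub_left_of_mem_uIcc (uIoc_subset_uIcc ht)
    have hpt : dist (p.1, t) (x₀, u₀) < δ :=
      (max_le_max le_rfl ht').trans_lt (mem_ball.mp hp)
    exact (dist_eq_norm (Ψ p.1 t) (Ψ x₀ u₀) ▸ hΨδ hpt).le
  have hint : IntervalIntegrable (Ψ p.1) volume u₀ p.2 :=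
    (hΨ.comp (Continuous.prodMk_right p.1)).intervalIntegrable _ _
  calc ‖(∫ t in u₀..p.2, Ψ p.1 t) - (∫ t in u₀..u₀, Ψ x₀ t) -
        (snd ℝ H ℝ).smulRight (Ψ x₀ u₀) (p - (x₀, u₀))‖
      = ‖∫ t in u₀..p.2, (Ψ p.1 t - Ψ x₀ u₀)‖ := by
        rw [integral_sub hint intervalIntegrable_const, integral_const]
        simp
    _ ≤ ε * |p.2 - u₀| := norm_integral_le_of_norm_le_const hclose
    _ ≤ ε * ‖p - (x₀, u₀)‖ := by
        gcongr
        exact norm_snd_le (p - (x₀, u₀))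

theorem hasFDerivAt_parametric_primitive [CompleteSpace E] {Ψ : H → ℝ → E}
    (hΨ : ContDiff ℝ 1 ↿Ψ) (a : ℝ) (x₀ : H) (u₀ : ℝ) :
    HasFDerivAt (fun p : H × ℝ ↦ ∫ t in a..p.2, Ψ p.1 t)
      ((∫ t in a..u₀, fderiv ℝ (fun y ↦ Ψ y t) x₀).comp (fst ℝ H ℝ) +
        (snd ℝ H ℝ).smulRight (Ψ x₀ u₀)) (x₀, u₀) := by
  have hint : ∀ x u v, IntervalIntegrable (Ψ x) volume u v := fun x _ _ ↦
    (hΨ.continuous.comp (Continuous.prodMk_right x)).intervalIntegrable _ _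
  have hsplit : (fun p : H × ℝ ↦ ∫ t in a..p.2, Ψ p.1 t) =
      fun p ↦ (∫ t in a..u₀, Ψ p.1 t) + ∫ t in u₀..p.2, Ψ p.1 t :=
    funext fun p ↦ (integral_add_adjacent_intervals (hint p.1 a u₀) (hint p.1 u₀ p.2)).symm
  rw [hsplit]
  exact ((hasFDerivAt_parametric_integral hΨ a u₀ x₀).comp (x₀, u₀) hasFDerivAt_fst).add
    (hasFDerivAt_parametric_integral_from hΨ.continuous x₀ u₀)

theorem contDiff_parametric_primitive_succ [CompleteSpace E] {Ψ : H → ℝ → E} {m : ℕ∞}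
    (hΨ : ContDiff ℝ (m + 1) ↿Ψ) (a : ℝ)
    (hΨ' : ContDiff ℝ m fun p : H × ℝ ↦ ∫ t in a..p.2, fderiv ℝ (fun y ↦ Ψ y t) p.1) :
    ContDiff ℝ (m + 1) fun p : H × ℝ ↦ ∫ t in a..p.2, Ψ p.1 t := by
  have hΨ1 : ContDiff ℝ 1 ↿Ψ := hΨ.of_le le_add_self
  have hderiv : ∀ p : H × ℝ, HasFDerivAt (fun p : H × ℝ ↦ ∫ t in a..p.2, Ψ p.1 t)
      ((∫ t in a..p.2, fderiv ℝ (fun y ↦ Ψ y t) p.1).comp (fst ℝ H ℝ) +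
        (snd ℝ H ℝ).smulRight (Ψ p.1 p.2)) p :=
    fun p ↦ hasFDerivAt_parametric_primitive hΨ1 a p.1 p.2
  refine contDiff_succ_iff_fderiv.2 ⟨fun p ↦ (hderiv p).differentiableAt, by simp, ?_⟩
  rw [funext fun p ↦ (hderiv p).fderiv]
  exact (hΨ'.clm_comp contDiff_const).add (contDiff_const.smulRight (hΨ.of_le le_self_add))

universe u v

-- `E` lives in `Type (max u v)` so that the induction can pass to `H →L[ℝ] E`.

theorem contDiff_parametric_primitive_of_nat {H : Type u} [NormedAddCommGroup H]
    [NormedSpace ℝ H] {E : Type max u v} [NormedAddCommGroup E] [NormedSpace ℝ E]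
    [CompleteSpace E] (m : ℕ) {Ψ : H → ℝ → E} (hΨ : ContDiff ℝ m ↿Ψ) (a : ℝ) :
    ContDiff ℝ m fun p : H × ℝ ↦ ∫ t in a..p.2, Ψ p.1 t := by
  induction m generalizing E with
  | zero => exact contDiff_zero.2 (continuous_parametric_primitive_of_continuous hΨ.continuous)
  | succ m ih =>
    push_cast at hΨ ⊢
    exact contDiff_parametric_primitive_succ hΨ a (ih (hΨ.fderiv_partial_fst le_rfl))

theorem contDiff_parametric_primitive {H : Type u} [NormedAddCommGroup H] [NormedSpace ℝ H]
    {E : Type v} [NormedAddCommGroup E] [NormedSpace ℝ E] [CompleteSpace E] {n : ℕ∞}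
    {Ψ : H → ℝ → E} (hΨ : ContDiff ℝ n ↿Ψ) (a : ℝ) :
    ContDiff ℝ n fun p : H × ℝ ↦ ∫ t in a..p.2, Ψ p.1 t := by
  induction n using ENat.recTopCoe with
  | top =>
    exact contDiff_parametric_primitive_succ (m := ⊤) hΨ a <| contDiff_infty.2 fun k ↦
      contDiff_parametric_primitive_of_nat k (hΨ.fderiv_partial_fst (by exact_mod_cast le_top)) a
  | coe k =>
    cases k with
    | zero => exact contDiff_zero.2 (continuous_parametric_primitive_of_continuous hΨ.continuous)
    | succ k =>
      push_cast at hΨ ⊢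
      exact contDiff_parametric_primitive_succ (m := k) hΨ a
        (contDiff_parametric_primitive_of_nat k (hΨ.fderiv_partial_fst le_rfl) a)

end intervalIntegral

open intervalIntegral in
theorem contDiff_parametric_integral_variable_endpoint_general
    {F H : Type*} [NormedAddCommGroup F] [NormedSpace ℝ F] [CompleteSpace F]
    [NormedAddCommGroup H] [NormedSpace ℝ H]
    (n : ℕ∞) (hn : 1 ≤ n) (a : ℝ) {s : H → ℝ} {Φ : H → ℝ → F}
    (hs : ContDiff ℝ n s) (hΦ : ContDiff ℝ n ↿Φ) :
    ContDiff ℝ n (fun x ↦ ∫ t in a..s x, Φ x t) ∧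
      ∀ x : H, HasFDerivAt (fun x ↦ ∫ t in a..s x, Φ x t)
        ((∫ t in a..s x, fderiv ℝ (fun y ↦ Φ y t) x) +
          (fderiv ℝ s x).smulRight (Φ x (s x))) x := by
  have hn' : (1 : WithTop ℕ∞) ≤ n := by exact_mod_cast hn
  refine ⟨(contDiff_parametric_primitive hΦ a).comp (contDiff_id.prodMk hs), fun x ↦ ?_⟩
  have hsx : HasFDerivAt s (fderiv ℝ s x) x := (hs.differentiable (by positivity) x).hasFDerivAt
  refine ((hasFDerivAt_parametric_primitive (hΦ.of_le hn') a x (s x)).comp x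
    ((hasFDerivAt_id x).prodMk hsx)).congr_fderiv ?_
  ext v
  simp

/-- Differentiation under the integral sign with variable endpoint: if `s : H → ℝ` and
`Φ : H × ℝ → F` are `C^n` with `n ≥ 1`, then `x ↦ ∫ t in a..s x, Φ (x, t)` is `C^n`,
with derivative `∫ t in a..s x, ∂Φ/∂x (x,t) dt + Φ(x, s x) ⊗ Ds(x)`. -/
theorem contDiff_parametric_integral_variable_endpoint
    {F H : Type*} [NormedAddCommGroup F] [NormedSpace ℝ F] [CompleteSpace F]
    [NormedAddCommGroup H] [NormedSpace ℝ H] [FiniteDimensional ℝ H]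
    (n : ℕ∞) (hn : 1 ≤ n) (a : ℝ) {s : H → ℝ} {Φ : H → ℝ → F}
    (hs : ContDiff ℝ n s) (hΦ : ContDiff ℝ n ↿Φ) :
    ContDiff ℝ n (fun x ↦ ∫ t in a..s x, Φ x t) ∧
      ∀ x : H, HasFDerivAt (fun x ↦ ∫ t in a..s x, Φ x t)
        ((∫ t in a..s x, fderiv ℝ (fun y ↦ Φ y t) x) +
          (fderiv ℝ s x).smulRight (Φ x (s x))) x :=
  contDiff_parametric_integral_variable_endpoint_general n hn a hs hΦ
end

section
/- Estimate on corrugations: Fix a dual pair p = (π, v) on E and a smooth family of loops γ : [0,1] × E × S¹ → F. Define the corrugation corr_N(γ_t)(x) = (1/N)∫₀^{Nπ(x)} (γ_{t,x}(s) − avg(γ_{t,x})) ds. Then for every compact K ⊆ E and ε > 0, for all sufficiently large N, ‖corr_N(γ_t)(x)‖ ≤ ε for all t ∈ [0,1] and x ∈ K. -/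
open scoped ContDiff

/-- Estimate on corrugations: for a dual pair `(π, v)` and a smooth family of loops
`γ : [0,1] × E × S¹ → F`, the corrugation
`x ↦ (1/N) ∫₀^{N π x} (γ t x s - avg (γ t x)) ds` is uniformly `≤ ε` on any compact
set for `N` large enough. -/
theorem corrugation_le {E F : Type*}
    [NormedAddCommGroup E] [NormedSpace ℝ E] [FiniteDimensional ℝ E]
    [NormedAddCommGroup F] [NormedSpace ℝ F] [FiniteDimensional ℝ F]
    (π : E →L[ℝ] ℝ) (v : E) (hv : π v = 1)
    {γ : ℝ → E → ℝ → F} (hγ : ContDiff ℝ ∞ ↿γ)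
    (hper : ∀ t x, Function.Periodic (γ t x) 1)
    {K : Set E} (hK : IsCompact K) {ε : ℝ} (hε : 0 < ε) :
    ∃ N₀ : ℝ, ∀ N ≥ N₀, ∀ t ∈ Set.Icc (0 : ℝ) 1, ∀ x ∈ K,
      ‖(N⁻¹ : ℝ) • ∫ s in (0 : ℝ)..(N * π x),
          (γ t x s - ∫ u in (0 : ℝ)..1, γ t x u)‖ ≤ ε := by
  have hγc : Continuous ↿γ := hγ.continuous
  -- the function (t, x, s) ↦ γ t x s - avg, as uncurried function of ((t,x), s)
  set g : (ℝ × E) → ℝ → F := fun p s => γ p.1 p.2 s - ∫ u in (0:ℝ)..1, γ p.1 p.2 u with hg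
  have hγc2 : Continuous fun p : (ℝ × E) × ℝ => γ p.1.1 p.1.2 p.2 := by
    have : Continuous fun p : (ℝ × E) × ℝ => (p.1.1, p.1.2, p.2) := by fun_prop
    exact hγc.comp this
  have havgc : Continuous fun p : ℝ × E => ∫ u in (0:ℝ)..1, γ p.1 p.2 u :=
    intervalIntegral.continuous_parametric_intervalIntegral_of_continuous'
      (f := fun p : ℝ × E => fun s => γ p.1 p.2 s) hγc2 0 1
  have hgc : Continuous (Function.uncurry g) := by
    exact hγc2.sub (havgc.comp continuous_fst)
  -- the primitive
  set Φ : (ℝ × E) × ℝ → F := fun p => ∫ s in (0:ℝ)..p.2, g p.1 s with hΦ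
  have hΦc : Continuous Φ :=
    intervalIntegral.continuous_parametric_primitive_of_continuous hgc
  -- integrability of g
  have hint : ∀ p : ℝ × E, ∀ a b : ℝ, IntervalIntegrable (g p) MeasureTheory.volume a b := by
    intro p a b
    exact ((hγc.comp (by fun_prop : Continuous fun s : ℝ => (p.1, p.2, s))).sub
      continuous_const).intervalIntegrable a b
  -- average of g is zero
  have havg0 : ∀ p : ℝ × E, (∫ s in (0:ℝ)..1, g p s) = 0 := by
    intro p
    have h1 : IntervalIntegrable (fun s => γ p.1 p.2 s) MeasureTheory.volume 0 1 :=
      (hγc.comp (by fun_prop : Continuous fun s : ℝ => (p.1, p.2, s))).intervalIntegrable 0 1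
    rw [hg]
    rw [intervalIntegral.integral_sub h1 (intervalIntegrable_const)]
    simp
  -- periodicity of the primitive in the last variable
  have hΦper : ∀ p : ℝ × E, Function.Periodic (fun u => Φ (p, u)) 1 := by
    intro p u
    have := Function.Periodic.intervalIntegral_add_eq_add
      (f := g p) (T := 1) (fun s => by simp [hg, hper p.1 p.2 s])
      0 u (hint p)
    simp only [hΦ]
    rw [this, show (0:ℝ) + 1 = 1 by norm_num, havg0 p, add_zero]
  -- bound Φ on the compact set
  obtain ⟨C, hC⟩ := ((isCompact_Icc.prod hK).prod (isCompact_Icc (a := (0:ℝ)) (b := 1))).exists_bound_of_continuousOn hΦc.continuousOn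
  -- key bound: for all t ∈ [0,1], x ∈ K, u : ℝ, ‖Φ ((t,x),u)‖ ≤ C
  have key : ∀ t ∈ Set.Icc (0:ℝ) 1, ∀ x ∈ K, ∀ u : ℝ, ‖Φ ((t, x), u)‖ ≤ C := by
    intro t ht x hx u
    have hfr : Φ ((t, x), u) = Φ ((t, x), Int.fract u) := by
      have := (hΦper (t, x)).sub_zsmul_eq (x := u) ⌊u⌋
      simp only [zsmul_eq_mul, smul_eq_mul, mul_one] at this
      rw [← Int.self_sub_floor]
      exact this.symm
    rw [hfr]
    exact hC _ ⟨⟨ht, hx⟩, ⟨Int.fract_nonneg u, (Int.fract_lt_one u).le⟩⟩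
  refine ⟨max 1 (C / ε), fun N hN t ht x hx => ?_⟩
  have hN1 : (1:ℝ) ≤ N := le_trans (le_max_left _ _) hN
  have hNpos : (0:ℝ) < N := lt_of_lt_of_le one_pos hN1
  have hCN : C ≤ N * ε := by
    have : C / ε ≤ N := le_trans (le_max_right _ _) hN
    calc C = (C / ε) * ε := by field_simp
    _ ≤ N * ε := by nlinarith
  have hb : ‖∫ s in (0:ℝ)..(N * π x), (γ t x s - ∫ u in (0:ℝ)..1, γ t x u)‖ ≤ C :=
    key t ht x hx (N * π x)
  rw [norm_smul, norm_inv, Real.norm_eq_abs, abs_of_pos hNpos]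
  rw [inv_mul_le_iff₀ hNpos]
  exact le_trans hb hCN
end

section
/- Derivative formula for corrugations: With p = (π, v) a dual pair on E and γ : E × S¹ → F a smooth family of loops, the corrugation corr_N(γ)(x) = (1/N)∫₀^{Nπ(x)}(γ_x(s) − avg(γ_x)) ds is smooth in x and its derivative satisfies D(corr_N(γ))(x) = π ⊗ (γ_x(Nπ(x)) − avg(γ_x)) + R_N(x), where π ⊗ w denotes the rank-one map u ↦ π(u)·w and the remainder R_N(x) = (1/N)∫₀^{Nπ(x)}(∂_x γ_x(s) − ∂_x avg(γ)(x)) ds tends to 0 uniformly on compact sets as N → ∞. -/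
/-!
Differentiation under the integral sign (dominated on a neighbourhood by the tube lemma) makes
parametric integrals of smooth families smooth, and the Leibniz rule for `x ↦ ∫₀^{φ x} f x s`
together with the chain rule gives the derivative of the corrugation. The remainder is `N⁻¹` times
a primitive of `s ↦ ∂ₓγ (x, s) - ∂ₓ avg γ x`, which is `1`-periodic with mean zero; so the primitive
is itself periodic, hence bounded on `K × ℝ` by its maximum on `K × [0, 1]`, and the remainder is
`O(1/N)` uniformly on `K`.
-/

open scoped ContDiff Topology
open MeasureTheory

theorem IsCompact.exists_eventually_bound_of_continuous {X V : Type*} [TopologicalSpace X]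
    [NormedAddCommGroup V] {K : Set ℝ} (hK : IsCompact K) {F : X × ℝ → V} (hF : Continuous F)
    (x₀ : X) : ∃ C, ∀ᶠ x in 𝓝 x₀, ∀ t ∈ K, ‖F (x, t)‖ ≤ C := by
  obtain ⟨C, hC⟩ := hK.exists_bound_of_continuousOn
    (hF.comp (Continuous.prodMk_right x₀)).continuousOn
  refine ⟨C + 1, hK.eventually_forall_of_forall_eventually fun t ht ↦ ?_⟩
  have : ‖F (x₀, t)‖ < C + 1 := (hC t ht).trans_lt (lt_add_one C)
  exact (hF.norm.continuousAt.eventually_lt continuousAt_const this).mono fun _ h ↦ h.le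

section ParametricIntegral

variable {H : Type*} [NormedAddCommGroup H] [NormedSpace ℝ H]
  {G : Type*} [NormedAddCommGroup G] [NormedSpace ℝ G]

theorem ContDiff.hasFDerivAt_partial {f : H → ℝ → G} (hf : ContDiff ℝ 1 ↿f) (x : H) (s : ℝ) :
    HasFDerivAt (fun y ↦ f y s) ((fderiv ℝ ↿f (x, s)).comp (.inl ℝ H ℝ)) x :=
  (hf.differentiable one_ne_zero (x, s)).hasFDerivAt.comp (f := fun y ↦ (y, s)) x
    (hasFDerivAt_prodMk_left x s)

theorem ContDiff.contDiff_partialFDeriv {n : WithTop ℕ∞} {f : H → ℝ → G}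
    (hf : ContDiff ℝ (n + 1) ↿f) :
    ContDiff ℝ n fun p : H × ℝ ↦ fderiv ℝ (fun y ↦ f y p.2) p.1 := by
  have h1 : ContDiff ℝ 1 ↿f := hf.of_le le_add_self
  convert ((ContinuousLinearMap.compL ℝ H (H × ℝ) G).flip (.inl ℝ H ℝ)).contDiff.comp
    (hf.fderiv_right le_rfl) using 1
  exact funext fun p ↦ (h1.hasFDerivAt_partial p.1 p.2).fderiv

theorem hasFDerivAt_intervalIntegral_of_contDiff {f : H → ℝ → G} (hf : ContDiff ℝ 1 ↿f)
    (a b : ℝ) (x₀ : H) :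
    HasFDerivAt (fun x ↦ ∫ t in a..b, f x t)
      (∫ t in a..b, fderiv ℝ (fun y ↦ f y t) x₀) x₀ := by
  have hf' : Continuous fun p : H × ℝ ↦ fderiv ℝ (fun y ↦ f y p.2) p.1 :=
    (hf.contDiff_partialFDeriv (n := 0)).continuous
  obtain ⟨C, hC⟩ := isCompact_uIcc.exists_eventually_bound_of_continuous hf' x₀
  refine intervalIntegral.hasFDerivAt_integral_of_dominated_of_fderiv_le (μ := volume)
    (F' := fun x t ↦ fderiv ℝ (fun y ↦ f y t) x) (bound := fun _ ↦ C)
    hC ?_ ?_ ?_ ?_ intervalIntegrable_const ?_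
  · exact .of_forall fun x ↦ (hf.continuous.comp (Continuous.prodMk_right x)).aestronglyMeasurable
  · exact (hf.continuous.comp (Continuous.prodMk_right x₀)).intervalIntegrable a b
  · exact (hf'.comp (Continuous.prodMk_right x₀)).aestronglyMeasurable
  · exact .of_forall fun t ht x hx ↦ hx t (Set.uIoc_subset_uIcc ht)
  · exact .of_forall fun t _ x _ ↦ (hf.hasFDerivAt_partial x t).differentiableAt.hasFDerivAt

end ParametricIntegral

section ContDiffIntervalIntegral

universe u v

/- Differentiating moves the codomain from `G` to `H →L[ℝ] G`, so the induction runs over codomains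
in `Type (max u v)`, a universe closed under this operation; `ULift` transfers the result. -/
theorem contDiff_intervalIntegral_nat {H : Type u} [NormedAddCommGroup H] [NormedSpace ℝ H]
    {G : Type max u v} [NormedAddCommGroup G] [NormedSpace ℝ G] {n : ℕ} {f : H → ℝ → G}
    (hf : ContDiff ℝ n ↿f) (a b : ℝ) : ContDiff ℝ n fun x ↦ ∫ t in a..b, f x t := by
  induction n generalizing G with
  | zero =>
    exact contDiff_zero.2 <| intervalIntegral.continuous_parametric_intervalIntegral_of_continuous'
      (contDiff_zero.1 hf) a b
  | succ n ih =>
    have hf1 : ContDiff ℝ 1 ↿f := hf.of_le (by exact_mod_cast Nat.succ_pos n)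
    rw [Nat.cast_succ, contDiff_succ_iff_fderiv]
    refine ⟨fun x ↦ (hasFDerivAt_intervalIntegral_of_contDiff hf1 a b x).differentiableAt,
      by simp, ?_⟩
    rw [funext fun x ↦ (hasFDerivAt_intervalIntegral_of_contDiff hf1 a b x).fderiv]
    exact ih hf.contDiff_partialFDeriv

theorem contDiff_intervalIntegral {H : Type u} [NormedAddCommGroup H] [NormedSpace ℝ H]
    {G : Type v} [NormedAddCommGroup G] [NormedSpace ℝ G] {n : ℕ∞} {f : H → ℝ → G}
    (hf : ContDiff ℝ n ↿f) (a b : ℝ) : ContDiff ℝ n fun x ↦ ∫ t in a..b, f x t := by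
  let e : ULift.{u} G ≃L[ℝ] G := ContinuousLinearEquiv.ulift
  have hlift : (fun x ↦ ∫ t in a..b, f x t) = fun x ↦ e (∫ t in a..b, e.symm (f x t)) := by
    funext x
    simp only [intervalIntegral, ContinuousLinearEquiv.integral_comp_comm, map_sub,
      ContinuousLinearEquiv.apply_symm_apply]
  have hf' : ContDiff ℝ n ↿fun x t ↦ e.symm (f x t) := e.symm.contDiff.comp hf
  rw [hlift]
  induction n with
  | top =>
    exact contDiff_infty.2 fun k ↦ e.contDiff.comp <|
      contDiff_intervalIntegral_nat (hf'.of_le (by exact_mod_cast le_top)) a b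
  | coe k => exact e.contDiff.comp (contDiff_intervalIntegral_nat hf' a b)

end ContDiffIntervalIntegral

section Primitive

variable {H : Type*} [NormedAddCommGroup H] [NormedSpace ℝ H]
  {G : Type*} [NormedAddCommGroup G] [NormedSpace ℝ G]

theorem contDiff_parametric_primitive {n : ℕ∞} {f : H → ℝ → G} (hf : ContDiff ℝ n ↿f) :
    ContDiff ℝ n fun p : H × ℝ ↦ ∫ s in (0 : ℝ)..p.2, f p.1 s := by
  have hrescale (p : H × ℝ) :
      ∫ s in (0 : ℝ)..p.2, f p.1 s = p.2 • ∫ u in (0 : ℝ)..1, f p.1 (p.2 * u) := by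
    rw [intervalIntegral.smul_integral_comp_mul_left, mul_zero, mul_one]
  simp only [hrescale]
  refine contDiff_snd.smul
    (contDiff_intervalIntegral (f := fun (p : H × ℝ) u ↦ f p.1 (p.2 * u)) ?_ 0 1)
  exact hf.comp ((contDiff_fst.comp contDiff_fst).prodMk
    ((contDiff_snd.comp contDiff_fst).mul contDiff_snd))

variable [CompleteSpace G]

theorem hasFDerivAt_parametric_primitive {f : H → ℝ → G} (hf : ContDiff ℝ 1 ↿f) (x : H) (T : ℝ) :
    HasFDerivAt (fun p : H × ℝ ↦ ∫ s in (0 : ℝ)..p.2, f p.1 s)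
      ((∫ s in (0 : ℝ)..T, fderiv ℝ (fun y ↦ f y s) x).coprod
        ((1 : ℝ →L[ℝ] ℝ).smulRight (f x T))) (x, T) := by
  set Φ := fun p : H × ℝ ↦ ∫ s in (0 : ℝ)..p.2, f p.1 s
  have hΦ : HasFDerivAt Φ (fderiv ℝ Φ (x, T)) (x, T) :=
    ((contDiff_parametric_primitive (n := 1) hf).differentiable one_ne_zero _).hasFDerivAt
  have hx : fderiv ℝ Φ (x, T) ∘L .inl ℝ H ℝ = ∫ s in (0 : ℝ)..T, fderiv ℝ (fun y ↦ f y s) x :=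
    (hΦ.comp (f := fun y : H ↦ (y, T)) x (hasFDerivAt_prodMk_left x T)).unique
      (hasFDerivAt_intervalIntegral_of_contDiff hf 0 T x)
  have hfx : Continuous (f x) := hf.continuous.comp (Continuous.prodMk_right x)
  have hT : fderiv ℝ Φ (x, T) ∘L .inr ℝ H ℝ = (1 : ℝ →L[ℝ] ℝ).smulRight (f x T) :=
    (hΦ.comp (f := fun t : ℝ ↦ (x, t)) T (hasFDerivAt_prodMk_right x T)).unique <|
      hasDerivAt_iff_hasFDerivAt.1 <| intervalIntegral.integral_hasDerivAt_right
        (hfx.intervalIntegrable 0 T) (hfx.stronglyMeasurableAtFilter volume _) hfx.continuousAt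
  rw [← hx, ← hT, ContinuousLinearMap.coprod_comp_inl_inr]
  exact hΦ

theorem HasFDerivAt.parametric_primitive_comp {f : H → ℝ → G} (hf : ContDiff ℝ 1 ↿f)
    {φ : H → ℝ} {φ' : H →L[ℝ] ℝ} {x : H} (hφ : HasFDerivAt φ φ' x) :
    HasFDerivAt (fun y ↦ ∫ s in (0 : ℝ)..φ y, f y s)
      ((∫ s in (0 : ℝ)..φ x, fderiv ℝ (fun y ↦ f y s) x) + φ'.smulRight (f x (φ x))) x := by
  refine ((hasFDerivAt_parametric_primitive hf x (φ x)).comp x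
    ((hasFDerivAt_id x).prodMk hφ)).congr_fderiv ?_
  ext u
  simp

end Primitive

section Periodic

variable {V : Type*} [NormedAddCommGroup V]

theorem IsCompact.exists_bound_of_continuous_of_periodic {X : Type*} [TopologicalSpace X]
    {K : Set X} (hK : IsCompact K) {P : X × ℝ → V} (hP : Continuous P) {T : ℝ} (hT : 0 < T)
    (hper : ∀ x, Function.Periodic (fun t ↦ P (x, t)) T) :
    ∃ C, ∀ x ∈ K, ∀ t, ‖P (x, t)‖ ≤ C := by
  obtain ⟨C, hC⟩ := (hK.prod isCompact_Icc).exists_bound_of_continuousOn hP.continuousOn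
  refine ⟨C, fun x hx t ↦ ?_⟩
  obtain ⟨s, ⟨hs₀, hsT⟩, hts⟩ := (hper x).exists_mem_Ico₀ hT t
  exact hts ▸ hC (x, s) ⟨hx, hs₀, hsT.le⟩

variable [NormedSpace ℝ V]

theorem Function.Periodic.intervalIntegral_periodic_of_integral_eq_zero {f : ℝ → V} {T : ℝ}
    (hf : Function.Periodic f T) (h_int : ∀ t₁ t₂, IntervalIntegrable f volume t₁ t₂)
    (hmean : ∫ s in (0 : ℝ)..T, f s = 0) :
    Function.Periodic (fun t ↦ ∫ s in (0 : ℝ)..t, f s) T := fun t ↦ by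
  simp only [hf.intervalIntegral_add_eq_add 0 t h_int, zero_add, hmean, add_zero]

theorem IsCompact.exists_bound_primitive_of_periodic {X : Type*} [TopologicalSpace X]
    {K : Set X} (hK : IsCompact K) {h : X → ℝ → V} (hh : Continuous ↿h) {T : ℝ} (hT : 0 < T)
    (hper : ∀ x, Function.Periodic (h x) T) (hmean : ∀ x, ∫ s in (0 : ℝ)..T, h x s = 0) :
    ∃ C, ∀ x ∈ K, ∀ t, ‖∫ s in (0 : ℝ)..t, h x s‖ ≤ C :=
  hK.exists_bound_of_continuous_of_periodic
    (intervalIntegral.continuous_parametric_primitive_of_continuous hh) hT fun x ↦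
      (hper x).intervalIntegral_periodic_of_integral_eq_zero
        (fun _ _ ↦ (hh.comp (Continuous.prodMk_right x)).intervalIntegrable _ _) (hmean x)

end Periodic

theorem exists_forall_ge_norm_inv_smul_le {α V : Type*} [NormedAddCommGroup V] [NormedSpace ℝ V]
    {u : ℝ → α → V} {K : Set α} {C : ℝ} (hu : ∀ N, ∀ x ∈ K, ‖u N x‖ ≤ C) {ε : ℝ} (hε : 0 < ε) :
    ∃ N₀, ∀ N ≥ N₀, ∀ x ∈ K, ‖N⁻¹ • u N x‖ ≤ ε := by
  refine ⟨max C 0 / ε + 1, fun N hN x hx ↦ ?_⟩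
  have hCN : max C 0 < N * ε := (div_lt_iff₀ hε).1 (by linarith)
  have hN₀ : 0 < N := lt_of_lt_of_le (by positivity) hN
  rw [norm_smul, Real.norm_of_nonneg (inv_nonneg.2 hN₀.le), inv_mul_le_iff₀ hN₀]
  exact ((hu N x hx).trans (le_max_left C 0)).trans hCN.le

theorem exists_bound_primitive_partialFDeriv_sub_fderiv_average {H G : Type*}
    [NormedAddCommGroup H] [NormedSpace ℝ H] [NormedAddCommGroup G] [NormedSpace ℝ G]
    [CompleteSpace G]
    {γ : H → ℝ → G} (hγ : ContDiff ℝ 1 ↿γ) (hper : ∀ x, Function.Periodic (γ x) 1)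
    {K : Set H} (hK : IsCompact K) :
    ∃ C, ∀ x ∈ K, ∀ t, ‖∫ s in (0 : ℝ)..t,
      (fderiv ℝ (fun y ↦ γ y s) x - fderiv ℝ (fun y ↦ ∫ u in (0 : ℝ)..1, γ y u) x)‖ ≤ C := by
  have hdγ : Continuous fun p : H × ℝ ↦ fderiv ℝ (fun y ↦ γ y p.2) p.1 :=
    (hγ.contDiff_partialFDeriv (n := 0)).continuous
  have hdγavg : Continuous fun x ↦ ∫ u in (0 : ℝ)..1, fderiv ℝ (fun y ↦ γ y u) x :=
    intervalIntegral.continuous_parametric_intervalIntegral_of_continuous' hdγ 0 1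
  simp only [fun x ↦ (hasFDerivAt_intervalIntegral_of_contDiff hγ 0 1 x).fderiv]
  refine hK.exists_bound_primitive_of_periodic (hdγ.sub (hdγavg.comp continuous_fst)) one_pos
    (fun x s ↦ ?_) fun x ↦ ?_
  · simp only [funext fun y ↦ hper y s]
  · have hint : IntervalIntegrable (fun s ↦ fderiv ℝ (fun y ↦ γ y s) x) volume 0 1 :=
      (hdγ.comp (Continuous.prodMk_right x)).intervalIntegrable 0 1
    rw [intervalIntegral.integral_sub hint intervalIntegrable_const,
      intervalIntegral.integral_const]
    simp

theorem corrugation_fderiv_general {E F : Type*}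
    [NormedAddCommGroup E] [NormedSpace ℝ E]
    [NormedAddCommGroup F] [NormedSpace ℝ F] [FiniteDimensional ℝ F]
    (π : E →L[ℝ] ℝ)
    {γ : E → ℝ → F} (hγ : ContDiff ℝ ∞ ↿γ)
    (hper : ∀ x, Function.Periodic (γ x) 1)
    (corr : ℝ → E → F)
    (hcorr : ∀ N x, corr N x =
      (N⁻¹ : ℝ) • ∫ s in (0 : ℝ)..(N * π x), (γ x s - ∫ u in (0 : ℝ)..1, γ x u))
    (R : ℝ → E → E →L[ℝ] F)
    (hR : ∀ N x, R N x = (N⁻¹ : ℝ) • ∫ s in (0 : ℝ)..(N * π x),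
      (fderiv ℝ (fun y ↦ γ y s) x - fderiv ℝ (fun y ↦ ∫ u in (0 : ℝ)..1, γ y u) x)) :
    (∀ N, ContDiff ℝ ∞ (corr N)) ∧
    (∀ N, N ≠ 0 → ∀ x : E, HasFDerivAt (corr N)
      (π.smulRight (γ x (N * π x) - ∫ u in (0 : ℝ)..1, γ x u) + R N x) x) ∧
    ∀ K : Set E, IsCompact K → ∀ ε > (0 : ℝ),
      ∃ N₀ : ℝ, ∀ N ≥ N₀, ∀ x ∈ K, ‖R N x‖ ≤ ε := by
  set avg : E → F := fun y ↦ ∫ u in (0 : ℝ)..1, γ y u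
  have havg : ContDiff ℝ ∞ avg := contDiff_intervalIntegral hγ 0 1
  have hγ₁ : ContDiff ℝ 1 ↿γ := hγ.of_le (by simp)
  have hg : ContDiff ℝ ∞ ↿fun y s ↦ γ y s - avg y := hγ.sub (havg.comp contDiff_fst)
  have hcorr' (N : ℝ) : corr N = fun x ↦ N⁻¹ • ∫ s in (0 : ℝ)..N * π x, (γ x s - avg x) :=
    funext (hcorr N)
  refine ⟨fun N ↦ ?_, fun N hN x ↦ ?_, fun K hK ε hε ↦ ?_⟩
  · rw [hcorr' N]
    exact ((contDiff_parametric_primitive hg).comp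
      (contDiff_id.prodMk (contDiff_const.mul π.contDiff))).const_smul _
  · have hpartial (s : ℝ) : fderiv ℝ (fun y ↦ γ y s - avg y) x
        = fderiv ℝ (fun y ↦ γ y s) x - fderiv ℝ avg x :=
      fderiv_sub (hγ₁.hasFDerivAt_partial x s).differentiableAt
        (havg.differentiable (by simp) x)
    rw [hcorr' N]
    refine ((HasFDerivAt.parametric_primitive_comp (hg.of_le (by simp))
      ((π.hasFDerivAt (x := x)).const_mul N)).const_smul N⁻¹).congr_fderiv ?_
    ext u
    simp [hR, hpartial, smul_smul, hN, avg, add_comm]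
  · obtain ⟨C, hC⟩ := exists_bound_primitive_partialFDeriv_sub_fderiv_average hγ₁ hper hK
    simp only [hR]
    exact exists_forall_ge_norm_inv_smul_le (fun N x hx ↦ hC x hx _) hε

/-- Derivative formula for corrugations: the corrugation
`corr N x = (1/N) ∫₀^{N π x} (γ x s - avg (γ x)) ds` is smooth in `x`, its derivative is
`π ⊗ (γ x (N π x) - avg (γ x)) + R N x` where the remainder
`R N x = (1/N) ∫₀^{N π x} (∂ₓ γ (·, s) - ∂ₓ avg γ) (x) ds`
tends to `0` uniformly on compact sets as `N → ∞`. -/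
theorem corrugation_fderiv {E F : Type*}
    [NormedAddCommGroup E] [NormedSpace ℝ E] [FiniteDimensional ℝ E]
    [NormedAddCommGroup F] [NormedSpace ℝ F] [FiniteDimensional ℝ F]
    (π : E →L[ℝ] ℝ) (v : E) (hv : π v = 1)
    {γ : E → ℝ → F} (hγ : ContDiff ℝ ∞ ↿γ)
    (hper : ∀ x, Function.Periodic (γ x) 1)
    (corr : ℝ → E → F)
    (hcorr : ∀ N x, corr N x =
      (N⁻¹ : ℝ) • ∫ s in (0 : ℝ)..(N * π x), (γ x s - ∫ u in (0 : ℝ)..1, γ x u))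
    (R : ℝ → E → E →L[ℝ] F)
    (hR : ∀ N x, R N x = (N⁻¹ : ℝ) • ∫ s in (0 : ℝ)..(N * π x),
      (fderiv ℝ (fun y ↦ γ y s) x - fderiv ℝ (fun y ↦ ∫ u in (0 : ℝ)..1, γ y u) x)) :
    (∀ N, ContDiff ℝ ∞ (corr N)) ∧
    (∀ N, N ≠ 0 → ∀ x : E, HasFDerivAt (corr N)
      (π.smulRight (γ x (N * π x) - ∫ u in (0 : ℝ)..1, γ x u) + R N x) x) ∧
    ∀ K : Set E, IsCompact K → ∀ ε > (0 : ℝ),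
      ∃ N₀ : ℝ, ∀ N ≥ N₀, ∀ x ∈ K, ‖R N x‖ ≤ ε :=
  corrugation_fderiv_general π hγ hper corr hcorr R hR
end

section
/- Openness of the immersion relation for the sphere: Let E be a 3-dimensional real inner product space and B the open ball of radius 9/10. The set R = {(x, y, φ) ∈ E × E × L(E,E) | x ∉ B ⇒ φ restricted to x^⊥ is injective} is open in E × E × L(E,E). -/
/-!
`φ` is injective on `x ^⊥` exactly when `v ↦ (φ v, ⟪x, v⟫)` is injective, since the kernel of
the latter is `ker φ ∩ x ^⊥`. This operator depends continuously on `(x, φ)`, and injective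
operators on a finite-dimensional space form an open set; the relation is the union of this open
condition with the open condition `x ∈ B`.
-/

open Function

theorem LinearMap.injOn_ker_iff_injective_prod {R M M₂ M₃ : Type*} [Ring R] [AddCommGroup M]
    [AddCommGroup M₂] [AddCommGroup M₃] [Module R M] [Module R M₂] [Module R M₃]
    (f : M →ₗ[R] M₂) (g : M →ₗ[R] M₃) :
    Set.InjOn f (ker g) ↔ Injective (f.prod g) := by
  rw [← disjoint_ker_iff_injOn, ← ker_eq_bot, ker_prod, disjoint_iff, inf_comm]

theorem Submodule.orthogonal_span_singleton_eq_ker_innerSL {𝕜 E : Type*} [RCLike 𝕜]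
    [NormedAddCommGroup E] [InnerProductSpace 𝕜 E] (x : E) :
    (𝕜 ∙ x)ᗮ = LinearMap.ker (innerSL 𝕜 x : E →ₗ[𝕜] 𝕜) := by
  ext v
  simp [Submodule.mem_orthogonal_singleton_iff_inner_right]

theorem isOpen_setOf_injOn_orthogonal {𝕜 E F : Type*} [RCLike 𝕜] [NormedAddCommGroup E]
    [InnerProductSpace 𝕜 E] [FiniteDimensional 𝕜 E] [NormedAddCommGroup F] [NormedSpace 𝕜 F] :
    IsOpen {p : E × (E →L[𝕜] F) | Set.InjOn p.2 ((𝕜 ∙ p.1)ᗮ : Set E)} := by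
  have hcont : Continuous fun p : E × (E →L[𝕜] F) => p.2.prod (innerSL 𝕜 p.1) :=
    (ContinuousLinearMap.prodₗᵢ 𝕜).continuous.comp
      (continuous_snd.prodMk ((innerSL 𝕜).continuous.comp continuous_fst))
  convert ContinuousLinearMap.isOpen_injective.preimage hcont using 1
  ext p
  rw [Set.mem_preimage, Set.mem_ofPred_eq, Set.mem_ofPred_eq,
    Submodule.orthogonal_span_singleton_eq_ker_innerSL]
  exact LinearMap.injOn_ker_iff_injective_prod (p.2 : E →ₗ[𝕜] F) (innerSL 𝕜 p.1 : E →ₗ[𝕜] 𝕜)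

/-- Openness of the immersion relation for the sphere: in a 3-dimensional real inner
product space, the set of 1-jets `(x, y, φ)` such that `φ` is injective on `x ^⊥`
whenever `x` is outside the ball of radius `9/10` is open. -/
theorem immersion_relation_isOpen {E : Type*} [NormedAddCommGroup E]
    [InnerProductSpace ℝ E] (hdim : Module.finrank ℝ E = 3) :
    IsOpen {p : E × E × (E →L[ℝ] E) |
      p.1 ∉ Metric.ball (0 : E) (9 / 10) →
        Set.InjOn p.2.2 ((ℝ ∙ p.1)ᗮ : Set E)} := by
  have : FiniteDimensional ℝ E := .of_finrank_eq_succ hdim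
  simp only [imp_iff_not_or, not_not, Set.ofPred_or]
  exact (Metric.isOpen_ball.preimage continuous_fst).union
    (isOpen_setOf_injOn_orthogonal.preimage (continuous_fst.prodMk continuous_snd.snd))
end

section
/- Stability of injectivity on moving hyperplanes: Let E be a finite-dimensional real inner product space, x₀ ∈ E nonzero, and φ₀ ∈ L(E,E) injective on x₀^⊥. Then for all x sufficiently close to x₀ and all φ sufficiently close to φ₀ (in operator norm), φ is injective on x^⊥. -/
/-!
If `φ` fails to be injective on `(ℝ ∙ x)ᗮ`, some unit vector `y ⟂ x` has `φ y = 0`. This is a closed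
condition on `(x, φ, y)`, and in finite dimension the unit sphere is compact, so its failure for
every `y` at `(x₀, φ₀)` persists on a neighbourhood of `(x₀, φ₀)`.
-/

open Filter Topology Metric RealInnerProductSpace

theorem injOn_of_forall_mem_sphere {E F : Type*} [NormedAddCommGroup E] [NormedSpace ℝ E]
    [AddCommGroup F] [Module ℝ F] {f : E →ₗ[ℝ] F} {K : Submodule ℝ E}
    (hf : ∀ y ∈ sphere (0 : E) 1, y ∈ K → f y ≠ 0) : Set.InjOn f K := by
  refine (Set.injOn_iff_map_eq_zero f K).mpr fun y hyK hfy => ?_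
  by_contra hy
  refine hf (‖y‖⁻¹ • y) (by simp [norm_smul, hy]) (K.smul_mem _ hyK) ?_
  rw [map_smul, hfy, smul_zero]

theorem eventually_injOn_orthogonal {E F : Type*} [NormedAddCommGroup E]
    [InnerProductSpace ℝ E] [FiniteDimensional ℝ E] [NormedAddCommGroup F] [NormedSpace ℝ F]
    {x₀ : E} {φ₀ : E →L[ℝ] F} (hφ₀ : Set.InjOn φ₀ ((ℝ ∙ x₀)ᗮ : Set E)) :
    ∀ᶠ p : E × (E →L[ℝ] F) in 𝓝 (x₀, φ₀), Set.InjOn p.2 ((ℝ ∙ p.1)ᗮ : Set E) := by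
  let zeroLocus : Set ((E × (E →L[ℝ] F)) × E) := {q | ⟪q.1.1, q.2⟫ = 0 ∧ q.1.2 q.2 = 0}
  have hclosed : IsClosed zeroLocus :=
    (isClosed_eq (by fun_prop) continuous_const).inter (isClosed_eq (by fun_prop) continuous_const)
  have hbase : ∀ y ∈ sphere (0 : E) 1, ((x₀, φ₀), y) ∉ zeroLocus := by
    rintro y hy ⟨hxy, hφy⟩
    have : y = 0 := (Set.injOn_iff_map_eq_zero φ₀ _).mp hφ₀ y
      (Submodule.mem_orthogonal_singleton_iff_inner_right.mpr hxy) hφy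
    simp [this] at hy
  refine ((isCompact_sphere (0 : E) 1).eventually_forall_of_forall_eventually
    (P := fun p y => (p, y) ∉ zeroLocus)
    fun y hy => hclosed.isOpen_compl.mem_nhds (hbase y hy)).mono fun p hp => ?_
  exact injOn_of_forall_mem_sphere (f := p.2.toLinearMap) fun y hy hyK hφy =>
    hp y hy ⟨Submodule.mem_orthogonal_singleton_iff_inner_right.mp hyK, hφy⟩

theorem injOn_orthogonal_stable_general {E : Type*} [NormedAddCommGroup E]
    [InnerProductSpace ℝ E] [FiniteDimensional ℝ E]
    {x₀ : E} {φ₀ : E →L[ℝ] E}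
    (hφ₀ : Set.InjOn φ₀ ((ℝ ∙ x₀)ᗮ : Set E)) :
    ∃ ε > (0 : ℝ), ∀ x : E, ∀ φ : E →L[ℝ] E, ‖x - x₀‖ < ε → ‖φ - φ₀‖ < ε →
      Set.InjOn φ ((ℝ ∙ x)ᗮ : Set E) := by
  obtain ⟨ε, hε, h⟩ := Metric.eventually_nhds_iff.mp (eventually_injOn_orthogonal hφ₀)
  refine ⟨ε, hε, fun x φ hx hφ => h (y := (x, φ)) ?_⟩
  rw [Prod.dist_eq, dist_eq_norm, dist_eq_norm]
  exact max_lt hx hφ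

/-- Stability of injectivity on moving hyperplanes: if `φ₀` is injective on `x₀ ^⊥`
with `x₀ ≠ 0`, then every `φ` close to `φ₀` is injective on `x ^⊥` for every `x`
close to `x₀`. -/
theorem injOn_orthogonal_stable {E : Type*} [NormedAddCommGroup E]
    [InnerProductSpace ℝ E] [FiniteDimensional ℝ E]
    {x₀ : E} (hx₀ : x₀ ≠ 0) {φ₀ : E →L[ℝ] E}
    (hφ₀ : Set.InjOn φ₀ ((ℝ ∙ x₀)ᗮ : Set E)) :
    ∃ ε > (0 : ℝ), ∀ x : E, ∀ φ : E →L[ℝ] E, ‖x - x₀‖ < ε → ‖φ - φ₀‖ < ε →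
      Set.InjOn φ ((ℝ ∙ x)ᗮ : Set E) :=
  injOn_orthogonal_stable_general hφ₀
end

section
/- Ampleness of the sphere-immersion relation: Let E be a 3-dimensional real inner product space and B the ball of radius 9/10. The relation R = {(x, y, φ) | x ∉ B ⇒ φ|_{x^⊥} injective} ⊆ J¹(E,E) is ample: for every σ = (x,y,φ) ∈ R and every dual pair p = (π, v) on E, the slice R(σ,p) = {w ∈ E | (x, y, update_p(φ,w)) ∈ R} is ample in E (each connected component has convex hull all of E). -/
open Set Submodule
open scoped Pointwise

/-- Injectivity of a continuous linear map on a submodule is equivalent to its kernel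
intersecting the submodule trivially. -/
lemma injOn_submodule_iff {E : Type*} [NormedAddCommGroup E] [InnerProductSpace ℝ E]
    (ψ : E →L[ℝ] E) (P : Submodule ℝ E) :
    Set.InjOn ψ (P : Set E) ↔ ∀ a ∈ P, ψ a = 0 → a = 0 := by
  constructor
  · intro h a ha h0
    exact h ha P.zero_mem (by simpa using h0)
  · intro h a ha b hb hab
    have := h (a - b) (P.sub_mem ha hb) (by simp [map_sub, hab])
    exact sub_eq_zero.mp this

/-- Ampleness of the sphere-immersion relation: for every jet `(x, y, φ)` in the
relation `R = {(x, y, φ) | x ∉ B → φ|_{x^⊥} injective}` (with `B` the ball of radius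
`9/10` in a 3-dimensional inner product space) and every dual pair `(π, v)`, the slice
`{w | (x, y, update (φ, w)) ∈ R}` is ample, where `update (φ, w) = φ + π ⊗ (w - φ v)`
agrees with `φ` on `ker π` and sends `v` to `w`. -/
theorem immersion_relation_ample {E : Type*} [NormedAddCommGroup E]
    [InnerProductSpace ℝ E] (hdim : Module.finrank ℝ E = 3)
    (x y : E) (φ : E →L[ℝ] E)
    (hσ : x ∉ Metric.ball (0 : E) (9 / 10) → Set.InjOn φ ((ℝ ∙ x)ᗮ : Set E))
    (π : E →L[ℝ] ℝ) (v : E) (hv : π v = 1) :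
    AmpleSet {w : E | x ∉ Metric.ball (0 : E) (9 / 10) →
      Set.InjOn (φ + π.smulRight (w - φ v)) ((ℝ ∙ x)ᗮ : Set E)} := by
  have hfd : FiniteDimensional ℝ E := FiniteDimensional.of_finrank_eq_succ hdim
  by_cases hxB : x ∈ Metric.ball (0 : E) (9 / 10)
  · have : {w : E | x ∉ Metric.ball (0 : E) (9 / 10) →
        Set.InjOn (φ + π.smulRight (w - φ v)) ((ℝ ∙ x)ᗮ : Set E)} = univ :=
      eq_univ_of_forall fun w hx => absurd hxB hx
    rw [this]; exact ampleSet_univ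
  -- Now `x ∉ B`, so the implication is equivalent to its conclusion.
  have hset : {w : E | x ∉ Metric.ball (0 : E) (9 / 10) →
      Set.InjOn (φ + π.smulRight (w - φ v)) ((ℝ ∙ x)ᗮ : Set E)} =
      {w : E | Set.InjOn (φ + π.smulRight (w - φ v)) ((ℝ ∙ x)ᗮ : Set E)} := by
    ext w; exact ⟨fun h => h hxB, fun h _ => h⟩
  rw [hset]
  have hinjφ : Set.InjOn φ ((ℝ ∙ x)ᗮ : Set E) := hσ hxB
  have hx0 : x ≠ 0 := by
    rintro rfl; exact hxB (by simp : (0:E) ∈ Metric.ball (0:E) (9/10))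
  set P : Submodule ℝ E := (ℝ ∙ x)ᗮ with hP
  have hPdim : Module.finrank ℝ P = 2 := by
    have h1 : Module.finrank ℝ (ℝ ∙ x) = 1 := finrank_span_singleton hx0
    have h2 := Submodule.finrank_add_finrank_orthogonal (K := (ℝ ∙ x))
    rw [hdim, h1] at h2
    rw [← hP] at h2
    omega
  by_cases hπP : ∀ a ∈ P, π a = 0
  · -- the hyperplane `ker π` contains `P`, so the update doesn't change anything on `P`
    have : {w : E | Set.InjOn (φ + π.smulRight (w - φ v)) (P : Set E)} = univ := by
      refine eq_univ_of_forall fun w a ha b hb h => hinjφ ha hb ?_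
      simpa [ContinuousLinearMap.add_apply, ContinuousLinearMap.smulRight_apply,
        hπP a ha, hπP b hb] using h
    rw [this]; exact ampleSet_univ
  · push_neg at hπP
    obtain ⟨u₀, hu₀P, hu₀π⟩ := hπP
    -- normalize to get `u' ∈ P` with `π u' = 1`
    set u' : E := (π u₀)⁻¹ • u₀ with hu'
    have hu'P : u' ∈ P := P.smul_mem _ hu₀P
    have hu'π : π u' = 1 := by simp [hu', inv_mul_cancel₀ hu₀π]
    -- the kernel of `π` restricted to `P` is one-dimensional, spanned by some `u ≠ 0`
    set f : P →ₗ[ℝ] ℝ := π.toLinearMap.comp P.subtype with hf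
    have hfsurj : LinearMap.range f = ⊤ := by
      rw [LinearMap.range_eq_top]
      intro c
      exact ⟨c • ⟨u', hu'P⟩, by simp [hf, hu'π]⟩
    have hker : Module.finrank ℝ (LinearMap.ker f) = 1 := by
      have := LinearMap.finrank_range_add_finrank_ker f
      rw [hfsurj, finrank_top, hPdim] at this
      simp only [Module.finrank_self] at this
      omega
    have : Nontrivial (LinearMap.ker f) := by
      rw [← Module.finrank_pos_iff (R := ℝ), hker]; norm_num
    obtain ⟨U, hU0⟩ := exists_ne (0 : LinearMap.ker f)
    set u : E := ((U : P) : E) with hu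
    have huP : u ∈ P := (U : P).2
    have huπ : π u = 0 := U.2
    have hu0 : u ≠ 0 := by
      intro h
      apply hU0
      ext
      exact h
    have hspan : LinearMap.ker f = ℝ ∙ (U : P) := by
      refine (Submodule.eq_of_le_of_finrank_le ((span_singleton_le_iff_mem _ _).mpr U.2) ?_).symm
      rw [hker, finrank_span_singleton (show (U : P) ≠ 0 from fun h => hU0 (Subtype.ext h))]
    -- key: every element of `P ∩ ker π` is a multiple of `u`
    have key : ∀ b ∈ P, π b = 0 → ∃ s : ℝ, b = s • u := by
      intro b hb hbπ
      have : (⟨b, hb⟩ : P) ∈ LinearMap.ker f := by simpa [hf] using hbπ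
      rw [hspan, mem_span_singleton] at this
      obtain ⟨s, hs⟩ := this
      exact ⟨s, by simpa [Subtype.ext_iff, hu] using hs.symm⟩
    by_cases hφu : φ u = 0
    · -- the slice is empty since `u` is always in the kernel of the updated map
      have : {w : E | Set.InjOn (φ + π.smulRight (w - φ v)) (P : Set E)} = ∅ := by
        refine eq_empty_of_forall_notMem fun w hw => hu0 ?_
        rw [mem_setOf_eq, injOn_submodule_iff] at hw
        exact hw u huP (by simp [ContinuousLinearMap.add_apply,
          ContinuousLinearMap.smulRight_apply, huπ, hφu])
      rw [this]; exact ampleSet_empty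
    · -- the slice is the complement of an affine line, which is ample in dimension 3
      have hSet : {w : E | Set.InjOn (φ + π.smulRight (w - φ v)) (P : Set E)} =
          (φ v - φ u') +ᵥ ((ℝ ∙ (φ u) : Submodule ℝ E) : Set E)ᶜ := by
        ext w
        rw [Set.mem_vadd_set_iff_neg_vadd_mem]
        simp only [vadd_eq_add, mem_compl_iff, SetLike.mem_coe, mem_setOf_eq, neg_sub]
        have hrw : φ u' - φ v + w = w - φ v + φ u' := by abel
        rw [hrw]
        constructor
        · intro hinj hmem
          obtain ⟨s, hs⟩ := mem_span_singleton.mp hmem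
          have h1 : (φ + π.smulRight (w - φ v)) u' = s • φ u := by
            simp only [ContinuousLinearMap.add_apply, ContinuousLinearMap.smulRight_apply,
              hu'π, one_smul]
            rw [hs]; abel
          have h2 : (φ + π.smulRight (w - φ v)) (s • u) = s • φ u := by
            simp [ContinuousLinearMap.add_apply, ContinuousLinearMap.smulRight_apply, huπ]
          have := hinj hu'P (P.smul_mem s huP) (h1.trans h2.symm)
          apply one_ne_zero (α := ℝ)
          rw [← hu'π, this]
          simp [huπ]
        · intro hw
          rw [injOn_submodule_iff]
          intro a haP ha0
          set t : ℝ := π a with ht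
          have hbP : a - t • u' ∈ P := P.sub_mem haP (P.smul_mem _ hu'P)
          have hbπ : π (a - t • u') = 0 := by simp [map_sub, hu'π, ht]
          obtain ⟨s, hs⟩ := key _ hbP hbπ
          have hφa : φ a = s • φ u + t • φ u' := by
            have : φ (a - t • u') = s • φ u := by rw [hs, map_smul]
            rw [map_sub, map_smul, sub_eq_iff_eq_add] at this
            rw [this]
          have hzero : s • φ u + t • (w - φ v + φ u') = 0 := by
            have := ha0
            simp only [ContinuousLinearMap.add_apply, ContinuousLinearMap.smulRight_apply,
              ← ht, hφa] at this
            rw [← this]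
            module
          by_cases htz : t = 0
          · have : φ a = 0 := by
              have := ha0
              simpa [ContinuousLinearMap.add_apply, ContinuousLinearMap.smulRight_apply,
                ← ht, htz] using this
            exact hinjφ haP P.zero_mem (by simpa using this)
          · exfalso
            apply hw
            rw [mem_span_singleton]
            have h5 : t • (w - φ v + φ u') = (-s) • φ u := by
              rw [neg_smul]
              exact eq_neg_of_add_eq_zero_right hzero
            refine ⟨t⁻¹ * (-s), ?_⟩
            rw [← smul_smul, ← h5, smul_smul, inv_mul_cancel₀ htz, one_smul]
      rw [hSet]
      have hcodim : 1 < Module.rank ℝ (E ⧸ (ℝ ∙ (φ u))) := by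
        have h1 : Module.finrank ℝ (ℝ ∙ (φ u)) = 1 := finrank_span_singleton hφu
        have h2 := Submodule.finrank_quotient_add_finrank (ℝ ∙ (φ u))
        rw [hdim, h1] at h2
        have h3 : Module.finrank ℝ (E ⧸ (ℝ ∙ (φ u))) = 2 := by omega
        rw [← Module.finrank_eq_rank, h3]
        norm_cast
      exact AmpleSet.vadd (AmpleSet.of_one_lt_codim hcodim)
end
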